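/- Let d ≥ 3, C > 0, p > 1 and q = p/(p−1). Define for z ∈ ℝ^d, r ∈ (0,t], t ≥ 1 the function h(z,r) = 1_{|z| ≤ C} + t^{d/(2p)} r^{−d/2} e^{−|z|²/(qCr)} 1_{|z| > C}. Then there is a constant C' such that for all x with |x| ≥ 4C and all t ≥ 1: ∫_0^t ∫_{ℝ^d} h(x − y, r) h(y, r) dy dr ≤ C' (t^{d/p} + t^{d/(2p)}) / |x|^{d−2}. -/

import Mathlib

/-!
For `‖x‖ ≥ 4C` the balls of radius `C` around `0` and `x` are disjoint, and every point of one
of them is at distance `≥ 3‖x‖/4` from the other centre, so on each ball the product `h(x - y, r) h(y, r)` is at most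
`t^{d/(2p)} r^{-d/2} e^{-A/r}` with `A = ‖x‖²/(2qC)`. Off both balls the two Gaussians multiply,
by the parallelogram law, to `r^{-d} e^{-A/r} e^{-2‖y - x/2‖²/(qCr)}`, whose `y`-integral is
again a multiple of `r^{-d/2} e^{-A/r}`. Finally the substitution `r ↦ 1/r` gives
`∫_0^∞ r^{-d/2} e^{-A/r} dr = Γ(d/2 - 1) A^{1 - d/2}`, finite because `d ≥ 3`, and
`A^{1 - d/2}` is a constant times `‖x‖^{-(d-2)}`.
-/

open MeasureTheory
open scoped Classical

/-- The heat-type kernel `h(z,r) = 1_{‖z‖ ≤ C} + t^{d/(2p)} r^{−d/2} e^{−‖z‖²/(qCr)} 1_{‖z‖ > C}`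
dominating `E[φ^q(z + B_r)]^{1/q}` for a compactly supported mollifier `φ`. -/
noncomputable def hker (d : ℕ) (Cc t p q : ℝ) (z : EuclideanSpace ℝ (Fin d)) (r : ℝ) : ℝ :=
  (if ‖z‖ ≤ Cc then 1 else 0) +
    t ^ ((d : ℝ) / (2 * p)) * r ^ (-(d : ℝ) / 2) * Real.exp (-‖z‖ ^ 2 / (q * Cc * r)) *
      (if Cc < ‖z‖ then 1 else 0)

open Set Real Filter Metric

theorem integral_rpow_neg_mul_exp_neg_div_Ioi {s A : ℝ} (hs : 1 < s) (hA : 0 < A) :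
    ∫ r in Ioi (0 : ℝ), r ^ (-s) * exp (-A / r) = Gamma (s - 1) * A ^ (1 - s) := by
  set f : ℝ → ℝ := fun u => u ^ (s - 1 - 1) * exp (-(A * u))
  have hsubst : EqOn (fun r => (|(-1 : ℝ)| * r ^ ((-1 : ℝ) - 1)) • f (r ^ (-1 : ℝ)))
      (fun r => r ^ (-s) * exp (-A / r)) (Ioi 0) := by
    intro r (hr : 0 < r)
    simp only [f, smul_eq_mul, abs_neg, abs_one, one_mul, rpow_neg_one, inv_rpow hr.le,
      ← rpow_neg hr.le, ← mul_assoc, ← rpow_add hr]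
    congr 2 <;> ring
  rw [← setIntegral_congr_fun measurableSet_Ioi hsubst,
    integral_comp_rpow_Ioi f (by norm_num), integral_rpow_mul_exp_neg_mul_Ioi (by linarith) hA,
    one_div, inv_rpow hA.le, ← rpow_neg hA.le, mul_comm, neg_sub]

theorem integrableOn_rpow_neg_mul_exp_neg_div_Ioi {s A : ℝ} (hs : 1 < s) (hA : 0 < A) :
    IntegrableOn (fun r => r ^ (-s) * exp (-A / r)) (Ioi 0) := by
  refine Integrable.of_integral_ne_zero ?_
  rw [integral_rpow_neg_mul_exp_neg_div_Ioi hs hA]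
  have := Gamma_pos_of_pos (sub_pos.mpr hs)
  positivity

theorem setIntegral_Ioc_le_of_le_rpow_neg_mul_exp_neg_div {F : ℝ → ℝ} {s A c t : ℝ}
    (hs : 1 < s) (hA : 0 < A) (hc : 0 ≤ c) (hF0 : ∀ r ∈ Ioc 0 t, 0 ≤ F r)
    (hF : ∀ r ∈ Ioc 0 t, F r ≤ c * (r ^ (-s) * exp (-A / r))) :
    ∫ r in Ioc 0 t, F r ≤ c * (Gamma (s - 1) * A ^ (1 - s)) := by
  have hint := integrableOn_rpow_neg_mul_exp_neg_div_Ioi hs hA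
  calc ∫ r in Ioc 0 t, F r ≤ ∫ r in Ioc 0 t, c * (r ^ (-s) * exp (-A / r)) :=
        integral_mono_of_nonneg (ae_restrict_of_forall_mem measurableSet_Ioc hF0)
          ((hint.mono_set Ioc_subset_Ioi_self).const_mul c)
          (ae_restrict_of_forall_mem measurableSet_Ioc hF)
    _ = c * ∫ r in Ioc 0 t, r ^ (-s) * exp (-A / r) := integral_const_mul _ _
    _ ≤ c * ∫ r in Ioi 0, r ^ (-s) * exp (-A / r) := by
        refine mul_le_mul_of_nonneg_left (setIntegral_mono_set hint ?_
          (Eventually.of_forall Ioc_subset_Ioi_self)) hc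
        exact ae_restrict_of_forall_mem measurableSet_Ioi fun r (hr : 0 < r) => by positivity
    _ = _ := by rw [integral_rpow_neg_mul_exp_neg_div_Ioi hs hA]

theorem sq_div_rpow_one_sub_half {u c : ℝ} (hu : 0 ≤ u) (hc : 0 < c) (s : ℝ) :
    (u ^ 2 / c) ^ (1 - s / 2) = c ^ (s / 2 - 1) / u ^ (s - 2) := by
  rw [div_rpow (by positivity) hc.le, ← rpow_natCast u 2, ← rpow_mul hu,
    show ((2 : ℕ) : ℝ) * (1 - s / 2) = -(s - 2) by push_cast; ring,
    show 1 - s / 2 = -(s / 2 - 1) by ring, rpow_neg hu, rpow_neg hc.le, inv_div_inv]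

section Gaussian

variable {V : Type*} [NormedAddCommGroup V] [InnerProductSpace ℝ V]

theorem norm_sub_sq_add_norm_sq_eq (x y : V) :
    ‖x - y‖ ^ 2 + ‖y‖ ^ 2 = ‖x‖ ^ 2 / 2 + 2 * ‖y - (2 : ℝ)⁻¹ • x‖ ^ 2 := by
  rw [norm_sub_sq_real, norm_sub_sq_real, norm_smul, inner_smul_right, real_inner_comm]
  norm_num
  ring

theorem exp_neg_norm_sub_sq_div_mul_exp_neg_norm_sq_div (x y : V) (b : ℝ) :
    exp (-‖x - y‖ ^ 2 / b) * exp (-‖y‖ ^ 2 / b) =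
      exp (-‖x‖ ^ 2 / (2 * b)) * exp (-(2 / b) * ‖y - (2 : ℝ)⁻¹ • x‖ ^ 2) := by
  rw [← exp_add, ← exp_add]
  congr 1
  linear_combination (-1 / b) * norm_sub_sq_add_norm_sq_eq x y

variable [FiniteDimensional ℝ V] [MeasurableSpace V] [BorelSpace V]

theorem integral_exp_neg_mul_norm_sub_sq {b : ℝ} (hb : 0 < b) (w : V) :
    ∫ v, exp (-b * ‖v - w‖ ^ 2) = (π / b) ^ (Module.finrank ℝ V / 2 : ℝ) := by
  rw [integral_sub_right_eq_self (fun v => exp (-b * ‖v‖ ^ 2)) w,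
    GaussianFourier.integral_rexp_neg_mul_sq_norm hb]

theorem integrable_exp_neg_mul_norm_sub_sq {b : ℝ} (hb : 0 < b) (w : V) :
    Integrable fun v => exp (-b * ‖v - w‖ ^ 2) := by
  refine Integrable.of_integral_ne_zero ?_
  rw [integral_exp_neg_mul_norm_sub_sq hb]
  positivity

end Gaussian

theorem sq_norm_div_two_le_of_four_mul_norm_sub_le {E : Type*} [SeminormedAddCommGroup E]
    {x y : E} (h : 4 * ‖x - y‖ ≤ ‖x‖) : ‖x‖ ^ 2 / 2 ≤ ‖y‖ ^ 2 := by
  have := norm_sub_norm_le x y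
  nlinarith [norm_nonneg x, norm_nonneg (x - y)]

section hker

variable {d : ℕ} {Cc t p q r : ℝ}

theorem hker_of_norm_le {z : EuclideanSpace ℝ (Fin d)} (hz : ‖z‖ ≤ Cc) :
    hker d Cc t p q z r = 1 := by
  simp [hker, hz, not_lt.mpr hz]

theorem hker_of_lt_norm {z : EuclideanSpace ℝ (Fin d)} (hz : Cc < ‖z‖) :
    hker d Cc t p q z r =
      t ^ ((d : ℝ) / (2 * p)) * r ^ (-(d : ℝ) / 2) * exp (-‖z‖ ^ 2 / (q * Cc * r)) := by
  simp [hker, hz, not_le.mpr hz]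

theorem hker_nonneg (ht : 0 ≤ t) (hr : 0 ≤ r) (z : EuclideanSpace ℝ (Fin d)) :
    0 ≤ hker d Cc t p q z r := by
  unfold hker
  split_ifs <;> positivity

variable {x y : EuclideanSpace ℝ (Fin d)}

theorem hker_mul_hker_le_of_norm_sub_le (hC : 0 < Cc) (ha : 0 < q * Cc) (ht : 0 ≤ t)
    (hr : 0 < r) (hx : 4 * Cc ≤ ‖x‖) (hxy : ‖x - y‖ ≤ Cc) :
    hker d Cc t p q (x - y) r * hker d Cc t p q y r ≤
      t ^ ((d : ℝ) / (2 * p)) * (r ^ (-((d : ℝ) / 2)) * exp (-(‖x‖ ^ 2 / (2 * (q * Cc))) / r)) := by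
  have hy : Cc < ‖y‖ := by linarith [norm_sub_norm_le x y]
  have hfar := sq_norm_div_two_le_of_four_mul_norm_sub_le (by linarith : 4 * ‖x - y‖ ≤ ‖x‖)
  rw [hker_of_norm_le hxy, hker_of_lt_norm hy, one_mul, mul_assoc, neg_div (2 : ℝ)]
  gcongr ?_ * (?_ * ?_)
  rw [exp_le_exp, show -(‖x‖ ^ 2 / (2 * (q * Cc))) / r = -(‖x‖ ^ 2 / 2) / (q * Cc * r) by ring]
  have : 0 < q * Cc * r := by positivity
  gcongr

theorem hker_mul_hker_of_lt_norm (ht : 0 < t) (hr : 0 < r) (hxy : Cc < ‖x - y‖)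
    (hy : Cc < ‖y‖) :
    hker d Cc t p q (x - y) r * hker d Cc t p q y r =
      t ^ ((d : ℝ) / p) * r ^ (-(d : ℝ)) * exp (-(‖x‖ ^ 2 / (2 * (q * Cc))) / r) *
        exp (-(2 / (q * Cc * r)) * ‖y - (2 : ℝ)⁻¹ • x‖ ^ 2) := by
  have htt : t ^ ((d : ℝ) / (2 * p)) * t ^ ((d : ℝ) / (2 * p)) = t ^ ((d : ℝ) / p) := by
    rw [← rpow_add ht]; ring_nf
  have hrr : r ^ (-(d : ℝ) / 2) * r ^ (-(d : ℝ) / 2) = r ^ (-(d : ℝ)) := by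
    rw [← rpow_add hr]; ring_nf
  have hgauss := exp_neg_norm_sub_sq_div_mul_exp_neg_norm_sq_div x y (q * Cc * r)
  rw [show -‖x‖ ^ 2 / (2 * (q * Cc * r)) = -(‖x‖ ^ 2 / (2 * (q * Cc))) / r by ring] at hgauss
  rw [hker_of_lt_norm hxy, hker_of_lt_norm hy, ← htt, ← hrr]
  linear_combination (t ^ ((d : ℝ) / (2 * p)) * t ^ ((d : ℝ) / (2 * p)) *
    (r ^ (-(d : ℝ) / 2) * r ^ (-(d : ℝ) / 2))) * hgauss

theorem hker_mul_hker_le (hC : 0 < Cc) (ha : 0 < q * Cc) (ht : 0 < t) (hr : 0 < r)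
    (hx : 4 * Cc ≤ ‖x‖) :
    hker d Cc t p q (x - y) r * hker d Cc t p q y r ≤
      t ^ ((d : ℝ) / (2 * p)) * (r ^ (-((d : ℝ) / 2)) * exp (-(‖x‖ ^ 2 / (2 * (q * Cc))) / r)) *
          ((closedBall x Cc).indicator 1 y + (closedBall 0 Cc).indicator 1 y) +
        t ^ ((d : ℝ) / p) * r ^ (-(d : ℝ)) * exp (-(‖x‖ ^ 2 / (2 * (q * Cc))) / r) *
          exp (-(2 / (q * Cc * r)) * ‖y - (2 : ℝ)⁻¹ • x‖ ^ 2) := by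
  have hind (s : Set (EuclideanSpace ℝ (Fin d))) : (0 : ℝ) ≤ s.indicator 1 y :=
    indicator_nonneg (fun _ _ => zero_le_one) y
  rcases le_or_gt ‖x - y‖ Cc with hxy | hxy
  · have hmem : y ∈ closedBall x Cc := by rwa [mem_closedBall, dist_eq_norm, norm_sub_rev]
    refine (hker_mul_hker_le_of_norm_sub_le (p := p) hC ha ht.le hr hx hxy).trans
      (le_add_of_le_of_nonneg (le_mul_of_one_le_right (by positivity) ?_) (by positivity))
    rw [indicator_of_mem hmem]
    exact le_add_of_nonneg_right (hind _)
  rcases le_or_gt ‖y‖ Cc with hy | hy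
  · have hmem : y ∈ closedBall 0 Cc := by rwa [mem_closedBall, dist_zero_right]
    have := hker_mul_hker_le_of_norm_sub_le (p := p) (y := x - y) hC ha ht.le hr hx
      (by rwa [sub_sub_cancel])
    rw [sub_sub_cancel, mul_comm] at this
    refine this.trans
      (le_add_of_le_of_nonneg (le_mul_of_one_le_right (by positivity) ?_) (by positivity))
    rw [indicator_of_mem hmem]
    exact le_add_of_nonneg_left (hind _)
  · rw [hker_mul_hker_of_lt_norm ht hr hxy hy]
    have := add_nonneg (hind (closedBall x Cc)) (hind (closedBall 0 Cc))
    exact le_add_of_nonneg_left (by positivity)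

theorem integral_hker_mul_hker_le (hC : 0 < Cc) (ha : 0 < q * Cc) (ht : 0 < t) (hr : 0 < r)
    (hx : 4 * Cc ≤ ‖x‖) :
    ∫ y, hker d Cc t p q (x - y) r * hker d Cc t p q y r ≤
      (2 * volume.real (closedBall (0 : EuclideanSpace ℝ (Fin d)) Cc) +
          (π * (q * Cc) / 2) ^ ((d : ℝ) / 2)) * (t ^ ((d : ℝ) / p) + t ^ ((d : ℝ) / (2 * p))) *
        (r ^ (-((d : ℝ) / 2)) * exp (-(‖x‖ ^ 2 / (2 * (q * Cc))) / r)) := by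
  set V := volume.real (closedBall (0 : EuclideanSpace ℝ (Fin d)) Cc)
  set P := (π * (q * Cc) / 2) ^ ((d : ℝ) / 2)
  set T := t ^ ((d : ℝ) / (2 * p))
  set X := r ^ (-((d : ℝ) / 2)) * exp (-(‖x‖ ^ 2 / (2 * (q * Cc))) / r)
  set c := t ^ ((d : ℝ) / p) * r ^ (-(d : ℝ)) * exp (-(‖x‖ ^ 2 / (2 * (q * Cc))) / r)
  have hb : 0 < 2 / (q * Cc * r) := by positivity
  have hball_int (z : EuclideanSpace ℝ (Fin d)) :
      Integrable ((closedBall z Cc).indicator (1 : EuclideanSpace ℝ (Fin d) → ℝ)) :=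
    (integrableOn_const measure_closedBall_lt_top.ne).integrable_indicator measurableSet_closedBall
  have hball (z : EuclideanSpace ℝ (Fin d)) :
      ∫ y, (closedBall z Cc).indicator (1 : EuclideanSpace ℝ (Fin d) → ℝ) y = V := by
    rw [integral_indicator_one measurableSet_closedBall, Measure.addHaar_real_closedBall_center]
  have hgauss : ∫ y, exp (-(2 / (q * Cc * r)) * ‖y - (2 : ℝ)⁻¹ • x‖ ^ 2) =
      P * r ^ ((d : ℝ) / 2) := by
    rw [integral_exp_neg_mul_norm_sub_sq hb, finrank_euclideanSpace_fin,
      show π / (2 / (q * Cc * r)) = π * (q * Cc) / 2 * r by field_simp,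
      mul_rpow (by positivity) hr.le]
  have hcP : c * (P * r ^ ((d : ℝ) / 2)) = t ^ ((d : ℝ) / p) * P * X := by
    have hrr : r ^ (-(d : ℝ)) * r ^ ((d : ℝ) / 2) = r ^ (-((d : ℝ) / 2)) := by
      rw [← rpow_add hr]; ring_nf
    simp only [c, X, ← hrr]; ring
  have hballs_int : Integrable fun y => T * X *
      ((closedBall x Cc).indicator 1 y + (closedBall 0 Cc).indicator 1 y) :=
    ((hball_int x).add (hball_int 0)).const_mul _
  have hgauss_int : Integrable fun y : EuclideanSpace ℝ (Fin d) =>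
      c * exp (-(2 / (q * Cc * r)) * ‖y - (2 : ℝ)⁻¹ • x‖ ^ 2) :=
    (integrable_exp_neg_mul_norm_sub_sq hb _).const_mul _
  calc ∫ y, hker d Cc t p q (x - y) r * hker d Cc t p q y r
      ≤ ∫ y, (T * X * ((closedBall x Cc).indicator 1 y + (closedBall 0 Cc).indicator 1 y) +
          c * exp (-(2 / (q * Cc * r)) * ‖y - (2 : ℝ)⁻¹ • x‖ ^ 2)) :=
        integral_mono_of_nonneg
          (ae_of_all _ fun y => mul_nonneg (hker_nonneg ht.le hr.le _) (hker_nonneg ht.le hr.le _))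
          (hballs_int.add hgauss_int)
          (ae_of_all _ fun y => hker_mul_hker_le hC ha ht hr hx)
    _ = T * X * (V + V) + t ^ ((d : ℝ) / p) * P * X := by
        rw [integral_add hballs_int hgauss_int, integral_const_mul, integral_const_mul,
          integral_add (hball_int x) (hball_int 0), hball, hball, hgauss, hcP]
    _ ≤ (2 * V + P) * (t ^ ((d : ℝ) / p) + T) * X := by
        have : 0 ≤ V * t ^ ((d : ℝ) / p) * X := by positivity
        have : 0 ≤ P * T * X := by positivity
        linarith

end hker

/-- the space-time convolution of two such kernels decays like the
Newtonian potential `‖x‖^{−(d−2)}`, with polynomial-in-`t` prefactors. -/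
theorem hker_convolution_bound (d : ℕ) (hd : 3 ≤ d) (Cc : ℝ) (hC : 0 < Cc)
    (p q : ℝ) (hp : 1 < p) (hq : q = p / (p - 1)) :
    ∃ C' > 0, ∀ t : ℝ, 1 ≤ t → ∀ x : EuclideanSpace ℝ (Fin d), 4 * Cc ≤ ‖x‖ →
      (∫ r in Set.Ioc (0:ℝ) t, ∫ y, hker d Cc t p q (x - y) r * hker d Cc t p q y r)
        ≤ C' * (t ^ ((d : ℝ) / p) + t ^ ((d : ℝ) / (2 * p))) / ‖x‖ ^ ((d : ℝ) - 2) := by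
  have ha : 0 < q * Cc := mul_pos (hq ▸ div_pos (by linarith) (by linarith)) hC
  have hs : 1 < (d : ℝ) / 2 := by
    have : (3 : ℝ) ≤ d := by exact_mod_cast hd
    linarith
  have hΓ := Gamma_pos_of_pos (sub_pos.mpr hs)
  set K := 2 * volume.real (closedBall (0 : EuclideanSpace ℝ (Fin d)) Cc) +
    (π * (q * Cc) / 2) ^ ((d : ℝ) / 2)
  have hK : 0 < K := by positivity
  refine ⟨K * Gamma ((d : ℝ) / 2 - 1) * (2 * (q * Cc)) ^ ((d : ℝ) / 2 - 1), by positivity,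
    fun t ht x hx => ?_⟩
  have ht0 : 0 < t := by linarith
  have hA : 0 < ‖x‖ ^ 2 / (2 * (q * Cc)) := by
    have : 0 < ‖x‖ := by linarith
    positivity
  calc _ ≤ K * (t ^ ((d : ℝ) / p) + t ^ ((d : ℝ) / (2 * p))) *
        (Gamma ((d : ℝ) / 2 - 1) * (‖x‖ ^ 2 / (2 * (q * Cc))) ^ (1 - (d : ℝ) / 2)) :=
      setIntegral_Ioc_le_of_le_rpow_neg_mul_exp_neg_div hs hA (by positivity)
        (fun r hr => integral_nonneg fun y =>
          mul_nonneg (hker_nonneg ht0.le hr.1.le _) (hker_nonneg ht0.le hr.1.le _))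
        (fun r hr => integral_hker_mul_hker_le hC ha ht0 hr.1 hx)
    _ = _ := by
      rw [sq_div_rpow_one_sub_half (norm_nonneg x) (by positivity)]
      ring
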